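/- Suppose the norm ν on E is order continuous. Let S : E^t → F be a positive linear operator that is ρ-norm continuous (there exists C ≥ 0 with μ(S(x)) ≤ C·ρ(x) for all x ∈ E^t), and let T : E → F be its restriction to E. Then the following are equivalent: (i) for every increasing sequence (x_n) in E with 0 ≤ x_n and sup_n ν(x_n) < ∞, the sequence (T(x_n)) converges in μ-norm in F; (ii) for every increasing sequence (x_n) in E^t with 0 ≤ x_n and sup_n ρ(x_n) < ∞, the sequence (S(x_n)) converges in μ-norm in F. -/

import Mathlib

/-!
Order continuity of `ν` makes every `0 ≤ u` approximable from below by elements of `E` in the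
extended norm `ρ`: the differences `y - z` with `z ∈ E ∩ [0, u]` and `y ∈ E ∩ [u, y₀]` form a
downward directed subset of `E` whose infimum is `0` (because `E` is order dense and `G` is
Archimedean, `u` is both the supremum of the first and the infimum of the second family), so `ν`
takes arbitrarily small values on it, and `ρ (u - z) ≤ ν (y - z)`. Taking partial suprema, an
increasing `ρ`-bounded sequence `xₙ` in `E^t` is approximated by an increasing `ν`-bounded
sequence `zₙ ≤ xₙ` in `E` with `ρ (xₙ - zₙ) → 0`; continuity of `S` transfers the limit of
`T zₙ` to `S xₙ`. The converse holds since `ρ ≤ ν` on `E`.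
-/

open Set Filter Topology
open scoped Pointwise

section OrderDense

variable {G : Type*} [Lattice G] [AddCommGroup G] [AddLeftMono G]

lemma nonpos_of_forall_add_mem (arch : ∀ x y : G, (∀ n : ℕ, n • x ≤ y) → x ≤ 0)
    {s : Set G} {e z₀ u : G} (hz₀ : z₀ ∈ s) (hs : ∀ z ∈ s, z + e ∈ s) (hu : ∀ z ∈ s, z ≤ u) :
    e ≤ 0 := by
  have hmem : ∀ n : ℕ, z₀ + n • e ∈ s := by
    intro n
    induction n with
    | zero => simpa using hz₀
    | succ n ih => simpa [succ_nsmul, add_assoc] using hs _ ih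
  exact arch e (u - z₀) fun n => le_sub_iff_add_le'.2 (hu _ (hmem n))

lemma isLUB_inter_Icc_of_orderDense (arch : ∀ x y : G, (∀ n : ℕ, n • x ≤ y) → x ≤ 0)
    {E : Set G} (hEadd : ∀ x ∈ E, ∀ y ∈ E, x + y ∈ E)
    (hdense : ∀ x : G, 0 < x → ∃ y ∈ E, 0 < y ∧ y ≤ x) {z₀ u : G} (hz₀ : z₀ ∈ E)
    (hz₀u : z₀ ≤ u) : IsLUB (E ∩ Icc z₀ u) u := by
  refine ⟨fun z hz => hz.2.2, fun v hv => ?_⟩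
  by_contra huv
  obtain ⟨e, heE, he0, heu⟩ := hdense (u - u ⊓ v) (sub_pos.2 (inf_lt_left.2 huv))
  refine he0.not_ge (nonpos_of_forall_add_mem (s := E ∩ Icc z₀ u) arch ⟨hz₀, le_rfl, hz₀u⟩
    (fun z hz => ?_) fun z hz => hz.2.2)
  refine ⟨hEadd z hz.1 e heE, hz.2.1.trans (le_add_of_nonneg_right he0.le), ?_⟩
  calc z + e ≤ u ⊓ v + (u - u ⊓ v) := add_le_add (le_inf hz.2.2 (hv hz)) heu
    _ = u := add_sub_cancel _ _

lemma isGLB_inter_Icc_of_orderDense (arch : ∀ x y : G, (∀ n : ℕ, n • x ≤ y) → x ≤ 0)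
    {E : Set G} (hEadd : ∀ x ∈ E, ∀ y ∈ E, x + y ∈ E) (hEneg : ∀ x ∈ E, -x ∈ E)
    (hdense : ∀ x : G, 0 < x → ∃ y ∈ E, 0 < y ∧ y ≤ x) {u y₀ : G} (hy₀ : y₀ ∈ E)
    (huy₀ : u ≤ y₀) : IsGLB (E ∩ Icc u y₀) u := by
  have hneg : -(E ∩ Icc u y₀) = E ∩ Icc (-y₀) (-u) := by
    ext z
    simp only [Set.mem_neg, mem_inter_iff, mem_Icc]
    exact ⟨fun ⟨hz, hu, hy⟩ => ⟨by simpa using hEneg _ hz, neg_le.1 hy, le_neg.1 hu⟩,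
      fun ⟨hz, hy, hu⟩ => ⟨hEneg z hz, le_neg.1 hu, neg_le.1 hy⟩⟩
  rw [← isLUB_neg', hneg]
  exact isLUB_inter_Icc_of_orderDense arch hEadd hdense (hEneg _ hy₀) (neg_le_neg_iff.2 huy₀)

lemma directedOn_ge_sub {s t : Set G} (hs : DirectedOn (· ≥ ·) s)
    (ht : DirectedOn (· ≤ ·) t) : DirectedOn (· ≥ ·) (s - t) := by
  rintro _ ⟨a₁, ha₁, b₁, hb₁, rfl⟩ _ ⟨a₂, ha₂, b₂, hb₂, rfl⟩
  obtain ⟨a, ha, ha₁a, ha₂a⟩ := hs a₁ ha₁ a₂ ha₂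
  obtain ⟨b, hb, hb₁b, hb₂b⟩ := ht b₁ hb₁ b₂ hb₂
  exact ⟨a - b, sub_mem_sub ha hb, sub_le_sub ha₁a hb₁b, sub_le_sub ha₂a hb₂b⟩

end OrderDense

section LowerNorm

variable {G : Type*} [Lattice G] [AddCommGroup G] [AddLeftMono G] {E : Set G} {ν : G → ℝ}

/-- The extension `ρ` of `ν` from `E` to `G` in the statement. -/
noncomputable def lowerNorm (E : Set G) (ν : G → ℝ) (x : G) : ℝ :=
  sSup (ν '' (E ∩ Icc 0 |x|))

lemma mem_upperBounds_image_inter_Icc (hν_mono : ∀ x ∈ E, ∀ y ∈ E, |x| ≤ |y| → ν x ≤ ν y)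
    {x y : G} (hy : y ∈ E) (hxy : x ≤ y) : ν y ∈ upperBounds (ν '' (E ∩ Icc 0 x)) := by
  refine forall_mem_image.2 fun z hz => hν_mono z hz.1 y hy ?_
  rw [abs_of_nonneg hz.2.1]
  exact (hz.2.2.trans hxy).trans (le_abs_self y)

lemma bddAbove_image_inter_Icc (hmaj : ∀ x : G, ∃ y ∈ E, x ≤ y)
    (hν_mono : ∀ x ∈ E, ∀ y ∈ E, |x| ≤ |y| → ν x ≤ ν y) (x : G) :
    BddAbove (ν '' (E ∩ Icc 0 x)) :=
  let ⟨y, hy, hxy⟩ := hmaj x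
  ⟨ν y, mem_upperBounds_image_inter_Icc hν_mono hy hxy⟩

lemma le_lowerNorm (hmaj : ∀ x : G, ∃ y ∈ E, x ≤ y)
    (hν_mono : ∀ x ∈ E, ∀ y ∈ E, |x| ≤ |y| → ν x ≤ ν y) {x z : G} (hz : z ∈ E ∩ Icc 0 |x|) :
    ν z ≤ lowerNorm E ν x :=
  le_csSup (bddAbove_image_inter_Icc hmaj hν_mono _) (mem_image_of_mem ν hz)

lemma lowerNorm_le (hE0 : (0 : G) ∈ E) (hν_mono : ∀ x ∈ E, ∀ y ∈ E, |x| ≤ |y| → ν x ≤ ν y)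
    {x y : G} (hy : y ∈ E) (hxy : |x| ≤ y) : lowerNorm E ν x ≤ ν y :=
  csSup_le ⟨ν 0, mem_image_of_mem ν ⟨hE0, le_rfl, abs_nonneg x⟩⟩
    (mem_upperBounds_image_inter_Icc hν_mono hy hxy)

lemma lowerNorm_monotoneOn (hE0 : (0 : G) ∈ E) (hmaj : ∀ x : G, ∃ y ∈ E, x ≤ y)
    (hν_mono : ∀ x ∈ E, ∀ y ∈ E, |x| ≤ |y| → ν x ≤ ν y) :
    MonotoneOn (lowerNorm E ν) (Ici 0) := by
  intro a ha b hb hab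
  refine csSup_le_csSup (bddAbove_image_inter_Icc hmaj hν_mono _)
    ⟨ν 0, mem_image_of_mem ν ⟨hE0, le_rfl, abs_nonneg a⟩⟩ (image_mono ?_)
  rw [abs_of_nonneg ha, abs_of_nonneg hb]
  exact inter_subset_inter_right E (Icc_subset_Icc_right hab)

lemma exists_lowerNorm_sub_lt (arch : ∀ x y : G, (∀ n : ℕ, n • x ≤ y) → x ≤ 0)
    (hE0 : (0 : G) ∈ E) (hEadd : ∀ x ∈ E, ∀ y ∈ E, x + y ∈ E) (hEneg : ∀ x ∈ E, -x ∈ E)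
    (hEsup : SupClosed E) (hEinf : InfClosed E)
    (hdense : ∀ x : G, 0 < x → ∃ y ∈ E, 0 < y ∧ y ≤ x) (hmaj : ∀ x : G, ∃ y ∈ E, x ≤ y)
    (hν_mono : ∀ x ∈ E, ∀ y ∈ E, |x| ≤ |y| → ν x ≤ ν y)
    (hoc : ∀ D : Set G, D.Nonempty → D ⊆ E → (∀ d ∈ D, 0 ≤ d) →
      DirectedOn (· ≥ ·) D → IsGLB D 0 → sInf (ν '' D) = 0)
    {u : G} (hu : 0 ≤ u) {ε : ℝ} (hε : 0 < ε) :
    ∃ z ∈ E ∩ Icc 0 u, lowerNorm E ν (u - z) < ε := by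
  obtain ⟨y₀, hy₀, huy₀⟩ := hmaj u
  set D := E ∩ Icc u y₀ - E ∩ Icc 0 u
  have hD_glb : IsGLB D 0 := by
    simpa using (isGLB_inter_Icc_of_orderDense arch hEadd hEneg hdense hy₀ huy₀).sub
      (isLUB_inter_Icc_of_orderDense arch hEadd hdense hE0 hu)
  have hD_dir : DirectedOn (· ≥ ·) D := directedOn_ge_sub
    (directedOn_of_inf_mem fun a b ha hb =>
      ⟨hEinf ha.1 hb.1, le_inf ha.2.1 hb.2.1, inf_le_left.trans ha.2.2⟩)
    (directedOn_of_sup_mem fun a b ha hb =>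
      ⟨hEsup ha.1 hb.1, ha.2.1.trans le_sup_left, sup_le ha.2.2 hb.2.2⟩)
  have hDE : D ⊆ E := by
    rintro _ ⟨y, hy, z, hz, rfl⟩
    simpa [sub_eq_add_neg] using hEadd y hy.1 _ (hEneg z hz.1)
  have hD : D.Nonempty := ⟨y₀ - 0, sub_mem_sub ⟨hy₀, huy₀, le_rfl⟩ ⟨hE0, le_rfl, hu⟩⟩
  have hinf : sInf (ν '' D) < ε := by rwa [hoc D hD hDE hD_glb.1 hD_dir hD_glb]
  obtain ⟨_, ⟨_, ⟨y, hy, z, hz, rfl⟩, rfl⟩, hlt⟩ := exists_lt_of_csInf_lt (hD.image ν) hinf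
  refine ⟨z, hz, (lowerNorm_le hE0 hν_mono (hDE ⟨y, hy, z, hz, rfl⟩) ?_).trans_lt hlt⟩
  rw [abs_of_nonneg (sub_nonneg.2 hz.2.2)]
  exact sub_le_sub_right hy.2.1 z

end LowerNorm

lemma exists_monotone_approx {G : Type*} [Lattice G] [AddCommGroup G] [AddLeftMono G]
    {E : Set G} {ρ : G → ℝ} (hρ : MonotoneOn ρ (Ici 0)) (hEsup : SupClosed E)
    (approx : ∀ u : G, 0 ≤ u → ∀ ε : ℝ, 0 < ε → ∃ z ∈ E ∩ Icc 0 u, ρ (u - z) < ε)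
    {x : ℕ → G} (hx0 : ∀ n, 0 ≤ x n) (hx : Monotone x) :
    ∃ z : ℕ → G, Monotone z ∧ (∀ n, z n ∈ E ∩ Icc 0 (x n)) ∧
      ∀ n, ρ (x n - z n) < 1 / (n + 1) := by
  choose w hw hρw using fun n : ℕ => approx (x n) (hx0 n) (1 / (n + 1)) (by positivity)
  have hwz : ∀ n, w n ≤ partialSups w n := le_partialSups w
  have hzx : ∀ n, partialSups w n ≤ x n :=
    fun n => partialSups_le w n _ fun k hk => (hw k).2.2.trans (hx hk)
  refine ⟨partialSups w, (partialSups w).monotone, fun n => ⟨?_, ?_, hzx n⟩, fun n => ?_⟩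
  · rw [partialSups_apply]
    exact hEsup.finsetSup'_mem _ fun k _ => (hw k).1
  · exact (hw 0).2.1.trans (le_partialSups_of_le w (Nat.zero_le n))
  · refine lt_of_le_of_lt (hρ (sub_nonneg.2 (hzx n)) (sub_nonneg.2 (hw n).2.2) ?_) (hρw n)
    exact sub_le_sub_left (hwz n) (x n)

lemma tendsto_seminorm_sub_of_approx {G F : Type*} [AddCommGroup G] [AddCommGroup F]
    [Module ℝ F] {Et : Set G} {S : G → F} {ρ : G → ℝ} {p : Seminorm ℝ F} {C : ℝ}
    (hS_add : ∀ x ∈ Et, ∀ y ∈ Et, S (x + y) = S x + S y) (hC0 : 0 ≤ C)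
    (hC : ∀ x ∈ Et, p (S x) ≤ C * ρ x) {x z : ℕ → G} (hz : ∀ n, z n ∈ Et)
    (hxz : ∀ n, x n - z n ∈ Et) (hρ : ∀ n, ρ (x n - z n) < 1 / (n + 1)) {l : F}
    (hl : Tendsto (fun n => p (S (z n) - l)) atTop (𝓝 0)) :
    Tendsto (fun n => p (S (x n) - l)) atTop (𝓝 0) := by
  have hlim : Tendsto (fun n : ℕ => C * (1 / ((n : ℝ) + 1)) + p (S (z n) - l)) atTop (𝓝 0) := by
    simpa using (tendsto_one_div_add_atTop_nhds_zero_nat.const_mul C).add hl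
  refine squeeze_zero (fun n => apply_nonneg p _) (fun n => ?_) hlim
  calc p (S (x n) - l) = p (S (x n - z n) + (S (z n) - l)) := by
        rw [← add_sub_assoc, ← hS_add _ (hxz n) _ (hz n), sub_add_cancel]
    _ ≤ p (S (x n - z n)) + p (S (z n) - l) := map_add_le_add p _ _
    _ ≤ C * (1 / (n + 1)) + p (S (z n) - l) := by
        gcongr
        exact (hC _ (hxz n)).trans (mul_le_mul_of_nonneg_left (hρ n).le hC0)

theorem stmt19_general
    {G : Type*} [Lattice G] [AddCommGroup G] [Module ℝ G]
    [CovariantClass G G (· + ·) (· ≤ ·)]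
    (arch : ∀ x y : G, (∀ n : ℕ, n • x ≤ y) → x ≤ 0)
    (E : Set G)
    (hE0 : (0 : G) ∈ E)
    (hEadd : ∀ x ∈ E, ∀ y ∈ E, x + y ∈ E)
    (hEsmul : ∀ (c : ℝ), ∀ x ∈ E, c • x ∈ E)
    (hEsup : ∀ x ∈ E, ∀ y ∈ E, x ⊔ y ∈ E)
    (hEinf : ∀ x ∈ E, ∀ y ∈ E, x ⊓ y ∈ E)
    (hdense : ∀ x : G, 0 < x → ∃ y ∈ E, 0 < y ∧ y ≤ x)
    (hmaj : ∀ x : G, ∃ y ∈ E, x ≤ y)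
    (ν : G → ℝ)
    (hν_mono : ∀ x ∈ E, ∀ y ∈ E, |x| ≤ |y| → ν x ≤ ν y)
    (ρ : G → ℝ)
    (hρ : ∀ x : G, ρ x = sSup (ν '' {z | z ∈ E ∧ 0 ≤ z ∧ z ≤ |x|}))
    (Et : Set G)
    (hEEt : E ⊆ Et)
    (hEtadd : ∀ x ∈ Et, ∀ y ∈ Et, x + y ∈ Et)
    (hEtsmul : ∀ (c : ℝ), ∀ x ∈ Et, c • x ∈ Et)
    (hoc : ∀ D : Set G, D.Nonempty → D ⊆ E → (∀ d ∈ D, 0 ≤ d) →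
      DirectedOn (· ≥ ·) D → IsGLB D 0 → sInf (ν '' D) = 0)
    {F : Type*} [AddCommGroup F] [Module ℝ F]
    (μ : F → ℝ)
    (hμ_smul : ∀ (c : ℝ) (x : F), μ (c • x) = |c| * μ x)
    (hμ_add : ∀ x y : F, μ (x + y) ≤ μ x + μ y)
    (S : G → F)
    (hS_add : ∀ x ∈ Et, ∀ y ∈ Et, S (x + y) = S x + S y)
    (hS_cont : ∃ C : ℝ, 0 ≤ C ∧ ∀ x ∈ Et, μ (S x) ≤ C * ρ x) :
    (∀ x : ℕ → G, (∀ n, x n ∈ E) → (∀ n, 0 ≤ x n) → Monotone x →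
        BddAbove (Set.range fun n => ν (x n)) →
        ∃ l : F, Filter.Tendsto (fun n => μ (S (x n) - l)) Filter.atTop (nhds 0)) ↔
    (∀ x : ℕ → G, (∀ n, x n ∈ Et) → (∀ n, 0 ≤ x n) → Monotone x →
        BddAbove (Set.range fun n => ρ (x n)) →
        ∃ l : F, Filter.Tendsto (fun n => μ (S (x n) - l)) Filter.atTop (nhds 0)) := by
  obtain rfl : ρ = lowerNorm E ν := funext hρ
  obtain ⟨C, hC0, hC⟩ := hS_cont
  have hEsup' : SupClosed E := fun a ha b hb => hEsup a ha b hb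
  have hEneg : ∀ x ∈ E, -x ∈ E := fun x hx => by simpa using hEsmul (-1) x hx
  have hEtsub : ∀ x ∈ Et, ∀ y ∈ Et, x - y ∈ Et := fun x hx y hy => by
    simpa [sub_eq_add_neg] using hEtadd x hx _ (hEtsmul (-1) y hy)
  constructor
  · rintro hi x hxEt hx0 hx ⟨M, hM⟩
    obtain ⟨z, hz, hzx, hρz⟩ := exists_monotone_approx (lowerNorm_monotoneOn hE0 hmaj hν_mono)
      hEsup' (fun u hu ε hε => exists_lowerNorm_sub_lt arch hE0 hEadd hEneg hEsup'
        (fun a ha b hb => hEinf a ha b hb) hdense hmaj hν_mono hoc hu hε) hx0 hx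
    obtain ⟨l, hl⟩ := hi z (fun n => (hzx n).1) (fun n => (hzx n).2.1) hz
      ⟨M, forall_mem_range.2 fun n => (le_lowerNorm hmaj hν_mono
        (by rw [abs_of_nonneg (hx0 n)]; exact hzx n)).trans (hM ⟨n, rfl⟩)⟩
    exact ⟨l, tendsto_seminorm_sub_of_approx (p := Seminorm.of μ hμ_add hμ_smul) hS_add hC0 hC
      (fun n => hEEt (hzx n).1) (fun n => hEtsub _ (hxEt n) _ (hEEt (hzx n).1)) hρz hl⟩
  · rintro hii x hxE hx0 hx ⟨M, hM⟩
    exact hii x (fun n => hEEt (hxE n)) hx0 hx ⟨M, forall_mem_range.2 fun n =>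
      (lowerNorm_le hE0 hν_mono (hxE n) (abs_of_nonneg (hx0 n)).le).trans (hM ⟨n, rfl⟩)⟩

theorem stmt19
    {G : Type*} [Lattice G] [AddCommGroup G] [Module ℝ G]
    [CovariantClass G G (· + ·) (· ≤ ·)] [PosSMulMono ℝ G]
    (arch : ∀ x y : G, (∀ n : ℕ, n • x ≤ y) → x ≤ 0)
    (E : Set G)
    (hE0 : (0 : G) ∈ E)
    (hEadd : ∀ x ∈ E, ∀ y ∈ E, x + y ∈ E)
    (hEsmul : ∀ (c : ℝ), ∀ x ∈ E, c • x ∈ E)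
    (hEsup : ∀ x ∈ E, ∀ y ∈ E, x ⊔ y ∈ E)
    (hEinf : ∀ x ∈ E, ∀ y ∈ E, x ⊓ y ∈ E)
    (hdense : ∀ x : G, 0 < x → ∃ y ∈ E, 0 < y ∧ y ≤ x)
    (hmaj : ∀ x : G, ∃ y ∈ E, x ≤ y)
    (ν : G → ℝ)
    (hν_zero : ∀ x ∈ E, (ν x = 0 ↔ x = 0))
    (hν_smul : ∀ (c : ℝ), ∀ x ∈ E, ν (c • x) = |c| * ν x)
    (hν_add : ∀ x ∈ E, ∀ y ∈ E, ν (x + y) ≤ ν x + ν y)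
    (hν_mono : ∀ x ∈ E, ∀ y ∈ E, |x| ≤ |y| → ν x ≤ ν y)
    (ρ : G → ℝ)
    (hρ : ∀ x : G, ρ x = sSup (ν '' {z | z ∈ E ∧ 0 ≤ z ∧ z ≤ |x|}))
    (ι : G → ℝ)
    (hι : ∀ x : G, ι x = sInf (ν '' {y | y ∈ E ∧ |x| ≤ y}))
    (Et : Set G)
    (hEEt : E ⊆ Et)
    (hEtadd : ∀ x ∈ Et, ∀ y ∈ Et, x + y ∈ Et)
    (hEtsmul : ∀ (c : ℝ), ∀ x ∈ Et, c • x ∈ Et)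
    (hEtsup : ∀ x ∈ Et, ∀ y ∈ Et, x ⊔ y ∈ Et)
    (hEtinf : ∀ x ∈ Et, ∀ y ∈ Et, x ⊓ y ∈ Et)
    (hEt : ∀ x ∈ Et, ι x = ρ x)
    (hoc : ∀ D : Set G, D.Nonempty → D ⊆ E → (∀ d ∈ D, 0 ≤ d) →
      DirectedOn (· ≥ ·) D → IsGLB D 0 → sInf (ν '' D) = 0)
    {F : Type*} [ConditionallyCompleteLattice F] [AddCommGroup F] [Module ℝ F]
    [CovariantClass F F (· + ·) (· ≤ ·)] [PosSMulMono ℝ F]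
    (μ : F → ℝ)
    (hμ_zero : ∀ x : F, (μ x = 0 ↔ x = 0))
    (hμ_smul : ∀ (c : ℝ) (x : F), μ (c • x) = |c| * μ x)
    (hμ_add : ∀ x y : F, μ (x + y) ≤ μ x + μ y)
    (hμ_mono : ∀ x y : F, |x| ≤ |y| → μ x ≤ μ y)
    (S : G → F)
    (hS_add : ∀ x ∈ Et, ∀ y ∈ Et, S (x + y) = S x + S y)
    (hS_smul : ∀ (c : ℝ), ∀ x ∈ Et, S (c • x) = c • S x)
    (hS_pos : ∀ x ∈ Et, 0 ≤ x → 0 ≤ S x)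
    (hS_cont : ∃ C : ℝ, 0 ≤ C ∧ ∀ x ∈ Et, μ (S x) ≤ C * ρ x) :
    (∀ x : ℕ → G, (∀ n, x n ∈ E) → (∀ n, 0 ≤ x n) → Monotone x →
        BddAbove (Set.range fun n => ν (x n)) →
        ∃ l : F, Filter.Tendsto (fun n => μ (S (x n) - l)) Filter.atTop (nhds 0)) ↔
    (∀ x : ℕ → G, (∀ n, x n ∈ Et) → (∀ n, 0 ≤ x n) → Monotone x →
        BddAbove (Set.range fun n => ρ (x n)) →
        ∃ l : F, Filter.Tendsto (fun n => μ (S (x n) - l)) Filter.atTop (nhds 0)) :=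
  stmt19_general arch E hE0 hEadd hEsmul hEsup hEinf hdense hmaj ν hν_mono ρ hρ Et hEEt hEtadd
    hEtsmul hoc μ hμ_smul hμ_add S hS_add hS_cont
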